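/- arXiv:2310.19355 — 2 statements merged into one kernel-verified Lean document; each statement's English description precedes it below -/
import Mathlib

section
/- Knabe bound for star graphs: Let H_n = Σ_{i=1}^{n-1} h_{i,n} be a sum of orthogonal projectors acting on a finite-dimensional Hilbert space (a frustration-free star-graph Hamiltonian with center n and leaves 1,…,n−1), and suppose that for every (m−1)-element subset S of {1,…,n−1} the operator (Σ_{i∈S} h_{i,n})² ≥ Δ_m · Σ_{i∈S} h_{i,n} for some real Δ_m and some fixed m with 3 ≤ m ≤ n. Then H_n² ≥ [((n−2)/(m−2))(Δ_m − (n−m)/(n−2))] · H_n, hence the spectral gap of H_n is at least ((n−2)/(m−2))(Δ_m − (n−m)/(n−2)). -/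
/-!
Sum the hypothesis over all `k`-subsets `S` of the `N = n - 1` leaves, `k = m - 1`. Each `h i`
lies in `C(N-1, k-1)` of them and each pair `i ≠ j` in `C(N-2, k-2)`, so, as `h i ^ 2 = h i`,
`∑_S (∑_{i ∈ S} h i)² = C(N-2, k-2) H² + (C(N-1, k-1) - C(N-2, k-2)) H`.
Dividing by `C(N-2, k-2)` and using `C(N-1, k-1) = (N-1)/(k-1) · C(N-2, k-2)` gives `H² ≥ c H`,
which on an eigenvector of `H` with eigenvalue `λ > 0` reads `λ² ≥ c λ`.
-/

open Finset

section DoubleCounting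

variable {ι κ M : Type*} [DecidableEq ι] [AddCommMonoid M]

theorem Finset.sum_sum_eq_sum_card_filter_nsmul (s : Finset κ) (t : κ → Finset ι) {u : Finset ι}
    (ht : ∀ S ∈ s, t S ⊆ u) (f : ι → M) :
    ∑ S ∈ s, ∑ x ∈ t S, f x = ∑ x ∈ u, #{S ∈ s | x ∈ t S} • f x := by
  rw [sum_comm' (t' := u) (s' := fun x => {S ∈ s | x ∈ t S})]
  · simp only [sum_const]
  · intro S x
    simp only [mem_filter]
    exact ⟨fun h => ⟨h, ht S h.1 h.2⟩, fun h => h.1⟩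

theorem Finset.card_filter_powersetCard_mem (u : Finset ι) {k : ℕ} (hk : 1 ≤ k) {i : ι}
    (hi : i ∈ u) : #{S ∈ u.powersetCard k | i ∈ S} = (#u - 1).choose (k - 1) := by
  simpa using card_filter_powersetCard_subset {i} u k (by simpa) (by simpa)

theorem Finset.card_filter_powersetCard_mem_and_mem (u : Finset ι) {k : ℕ} (hk : 2 ≤ k)
    {i j : ι} (hi : i ∈ u) (hj : j ∈ u) (hij : i ≠ j) :
    #{S ∈ u.powersetCard k | i ∈ S ∧ j ∈ S} = (#u - 2).choose (k - 2) := by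
  have hcard : #{i, j} = 2 := card_pair hij
  simpa [insert_subset_iff, hcard] using
    card_filter_powersetCard_subset {i, j} u k (by simp [insert_subset_iff, hi, hj]) (by omega)

theorem Finset.sum_powersetCard_sum (u : Finset ι) {k : ℕ} (hk : 1 ≤ k) (f : ι → M) :
    ∑ S ∈ u.powersetCard k, ∑ i ∈ S, f i = (#u - 1).choose (k - 1) • ∑ i ∈ u, f i := by
  rw [sum_sum_eq_sum_card_filter_nsmul _ _ (fun S hS => (mem_powersetCard.1 hS).1), smul_sum]
  exact sum_congr rfl fun i hi => by rw [card_filter_powersetCard_mem u hk hi]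

-- Both sides are moved so that no subtraction occurs: `M` is only a monoid.
theorem Finset.sum_powersetCard_sum_sum (u : Finset ι) {k : ℕ} (hk : 2 ≤ k) (g : ι → ι → M) :
    ∑ S ∈ u.powersetCard k, ∑ i ∈ S, ∑ j ∈ S, g i j
        + (#u - 2).choose (k - 2) • ∑ i ∈ u, g i i
      = (#u - 2).choose (k - 2) • ∑ i ∈ u, ∑ j ∈ u, g i j
        + (#u - 1).choose (k - 1) • ∑ i ∈ u, g i i := by
  have hpairs : ∑ S ∈ u.powersetCard k, ∑ i ∈ S, ∑ j ∈ S, g i j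
      = ∑ i ∈ u, ∑ j ∈ u, #{S ∈ u.powersetCard k | i ∈ S ∧ j ∈ S} • g i j := by
    simp_rw [← sum_product' (f := g)]
    rw [sum_sum_eq_sum_card_filter_nsmul _ (fun S => S ×ˢ S)
      (fun S hS => product_subset_product (mem_powersetCard.1 hS).1 (mem_powersetCard.1 hS).1)]
    simp only [mem_product, sum_product]
  rw [hpairs, smul_sum, smul_sum, smul_sum, ← sum_add_distrib, ← sum_add_distrib]
  refine sum_congr rfl fun i hi => ?_
  have hoff : ∀ j ∈ u.erase i, #{S ∈ u.powersetCard k | i ∈ S ∧ j ∈ S} • g i j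
      = (#u - 2).choose (k - 2) • g i j := fun j hj => by
    rw [card_filter_powersetCard_mem_and_mem u hk hi (mem_of_mem_erase hj)
      (ne_of_mem_erase hj).symm]
  have hdiag : #{S ∈ u.powersetCard k | i ∈ S ∧ i ∈ S} = (#u - 1).choose (k - 1) := by
    simpa using card_filter_powersetCard_mem u (by omega) hi
  rw [← add_sum_erase u _ hi, ← add_sum_erase u _ hi, sum_congr rfl hoff, hdiag, ← smul_sum,
    smul_add]
  abel

end DoubleCounting

theorem Finset.sum_powersetCard_sum_mul_sum_of_isIdempotentElem {ι R : Type*} [DecidableEq ι]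
    [NonUnitalSemiring R] (u : Finset ι) {k : ℕ} (hk : 2 ≤ k) (p : ι → R)
    (hp : ∀ i ∈ u, IsIdempotentElem (p i)) :
    ∑ S ∈ u.powersetCard k, (∑ i ∈ S, p i) * ∑ i ∈ S, p i
        + (#u - 2).choose (k - 2) • ∑ i ∈ u, p i
      = (#u - 2).choose (k - 2) • ((∑ i ∈ u, p i) * ∑ i ∈ u, p i)
        + (#u - 1).choose (k - 1) • ∑ i ∈ u, p i := by
  simp_rw [sum_mul_sum]
  simpa only [sum_congr rfl fun i hi => (hp i hi).eq] using
    sum_powersetCard_sum_sum u hk fun i j => p i * p j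

open Matrix
open scoped ComplexOrder

theorem Matrix.PosSemidef.of_isHermitian_of_isIdempotentElem {n 𝕜 : Type*} [Fintype n]
    [RCLike 𝕜] {P : Matrix n n 𝕜} (hP : P.IsHermitian) (hP' : IsIdempotentElem P) :
    P.PosSemidef := by
  simpa only [hP.eq, hP'.eq] using posSemidef_conjTranspose_mul_self P

theorem Matrix.posSemidef_sum_mul_sum_sub_smul_of_forall_powersetCard {ι n : Type*}
    [DecidableEq ι] [Fintype n] (u : Finset ι) {k : ℕ} (hk : 2 ≤ k) (hku : k ≤ #u)
    (p : ι → Matrix n n ℂ) (hp : ∀ i ∈ u, IsIdempotentElem (p i)) (Δ : ℝ)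
    (hΔ : ∀ S ∈ u.powersetCard k,
      ((∑ i ∈ S, p i) * (∑ i ∈ S, p i) - (Δ : ℂ) • ∑ i ∈ S, p i).PosSemidef) :
    ((∑ i ∈ u, p i) * (∑ i ∈ u, p i)
      - (((#u - 1 : ℝ) / (k - 1) * (Δ - 1) + 1 : ℝ) : ℂ) • ∑ i ∈ u, p i).PosSemidef := by
  set H := ∑ i ∈ u, p i
  set a := (#u - 1).choose (k - 1)
  set b := (#u - 2).choose (k - 2)
  set c : ℝ := (#u - 1 : ℝ) / (k - 1) * (Δ - 1) + 1
  have hb : 0 < b := Nat.choose_pos (by omega)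
  have hab : (#u - 1 : ℝ) * b = a * (k - 1) := by
    have h := Nat.add_one_mul_choose_eq (#u - 2) (k - 2)
    rw [show #u - 2 + 1 = #u - 1 by omega, show k - 2 + 1 = k - 1 by omega] at h
    have h' : ((#u - 1 : ℕ) : ℝ) * b = a * ((k - 1 : ℕ) : ℝ) := by exact_mod_cast h
    rwa [Nat.cast_sub (by omega), Nat.cast_sub (by omega), Nat.cast_one] at h'
  have hc : (b : ℂ) * (c : ℂ) = Δ * a - a + b := by
    have hk1 : (k - 1 : ℝ) ≠ 0 := by
      have : (2 : ℝ) ≤ k := by exact_mod_cast hk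
      linarith
    have : (b : ℝ) * c = Δ * a - a + b := by
      simp only [c]
      field_simp
      linear_combination (Δ - 1) * hab
    exact_mod_cast this
  have hsum : ∑ S ∈ u.powersetCard k,
      ((∑ i ∈ S, p i) * (∑ i ∈ S, p i) - (Δ : ℂ) • ∑ i ∈ S, p i)
        = (b : ℂ) • (H * H - (c : ℂ) • H) := by
    have hsq := sum_powersetCard_sum_mul_sum_of_isIdempotentElem u hk p hp
    rw [sum_sub_distrib, ← smul_sum, sum_powersetCard_sum u (by omega), eq_sub_of_add_eq hsq,
      smul_sub, smul_smul, hc]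
    simp only [← Nat.cast_smul_eq_nsmul ℂ]
    module
  have hpsd : ((b : ℝ)⁻¹ • (b : ℂ) • (H * H - (c : ℂ) • H)).PosSemidef :=
    hsum ▸ (posSemidef_sum _ hΔ).smul (inv_nonneg.2 b.cast_nonneg)
  rwa [← Complex.ofReal_natCast, Complex.coe_smul, smul_smul, inv_mul_cancel₀ (by positivity),
    one_smul] at hpsd

theorem Matrix.IsHermitian.le_eigenvalues_of_posSemidef_mul_self_sub_smul {𝕜 n : Type*}
    [RCLike 𝕜] [Fintype n] [DecidableEq n] {A : Matrix n n 𝕜} (hA : A.IsHermitian)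
    (hA₀ : A.PosSemidef) {c : ℝ} (hc : (A * A - (c : 𝕜) • A).PosSemidef) {j : n}
    (hj : hA.eigenvalues j ≠ 0) : c ≤ hA.eigenvalues j := by
  set v := hA.eigenvectorBasis j
  set μ := hA.eigenvalues j
  have hAv : A *ᵥ ⇑v = μ • ⇑v := hA.mulVec_eigenvectorBasis j
  have hBv : (A * A - (c : 𝕜) • A) *ᵥ ⇑v = (μ * μ - c * μ) • ⇑v := by
    rw [sub_mulVec, ← mulVec_mulVec, hAv, mulVec_smul, hAv, smul_mulVec, hAv, smul_smul,
      RCLike.real_smul_eq_coe_smul (K := 𝕜) (μ * μ - c * μ),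
      RCLike.real_smul_eq_coe_smul (K := 𝕜) μ]
    push_cast
    module
  have hquad : 0 ≤ μ * μ - c * μ := by
    have := hc.re_dotProduct_nonneg v
    rw [hBv, dotProduct_smul] at this
    have hv : ‖v‖ = 1 := hA.eigenvectorBasis.orthonormal.1 j
    simpa [dotProduct_comm, ← EuclideanSpace.inner_eq_star_dotProduct, hv, RCLike.smul_re]
      using this
  have hμ : 0 < μ := (hA₀.eigenvalues_nonneg j).lt_of_ne' hj
  nlinarith

/-- Knabe bound for star graphs: if `H = ∑_{i=1}^{n-1} h_i` is a sum of projectors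
(a frustration-free star-graph Hamiltonian, with `h i` the term on the edge from leaf `i`
to the center), and for every `(m-1)`-element subset `S` of the leaves
`(∑_{i ∈ S} h_i)² ≥ Δm · ∑_{i ∈ S} h_i`, then
`H² ≥ ((n−2)/(m−2))(Δm − (n−m)/(n−2)) · H`, hence every nonzero eigenvalue of `H`
(in particular the spectral gap) is at least `((n−2)/(m−2))(Δm − (n−m)/(n−2))`. -/
theorem stmt3 {N : ℕ} (n m : ℕ) (hm : 3 ≤ m) (hmn : m ≤ n)
    (h : Fin (n - 1) → Matrix (Fin N) (Fin N) ℂ)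
    (hproj : ∀ i, (h i).IsHermitian ∧ h i * h i = h i)
    (Δm : ℝ)
    (hsub : ∀ S ∈ Finset.powersetCard (m - 1) (Finset.univ : Finset (Fin (n - 1))),
      ((∑ i ∈ S, h i) * (∑ i ∈ S, h i) - ((Δm : ℂ)) • (∑ i ∈ S, h i)).PosSemidef)
    (hHerm : (∑ i, h i).IsHermitian) :
    ((∑ i, h i) * (∑ i, h i)
      - (((((n : ℝ) - 2) / ((m : ℝ) - 2) * (Δm - ((n : ℝ) - (m : ℝ)) / ((n : ℝ) - 2)) : ℝ) : ℂ))
          • (∑ i, h i)).PosSemidef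
    ∧ ∀ j, hHerm.eigenvalues j ≠ 0 →
        ((n : ℝ) - 2) / ((m : ℝ) - 2) * (Δm - ((n : ℝ) - (m : ℝ)) / ((n : ℝ) - 2))
          ≤ hHerm.eigenvalues j := by
  have hu : #(univ : Finset (Fin (n - 1))) = n - 1 := by simp
  have hsq := posSemidef_sum_mul_sum_sub_smul_of_forall_powersetCard univ (k := m - 1)
    (by omega) (by omega) h (fun i _ => (hproj i).2) Δm hsub
  have hconst : (#(univ : Finset (Fin (n - 1))) - 1 : ℝ) / ((m - 1 : ℕ) - 1) * (Δm - 1) + 1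
      = ((n : ℝ) - 2) / ((m : ℝ) - 2) * (Δm - ((n : ℝ) - (m : ℝ)) / ((n : ℝ) - 2)) := by
    have hn2 : (n : ℝ) - 2 ≠ 0 := by
      have : (3 : ℝ) ≤ n := by exact_mod_cast hm.trans hmn
      linarith
    have hm2 : (m : ℝ) - 2 ≠ 0 := by
      have : (3 : ℝ) ≤ m := by exact_mod_cast hm
      linarith
    rw [hu, Nat.cast_sub (by omega), Nat.cast_sub (by omega),
      Nat.cast_one, sub_sub, sub_sub, one_add_one_eq_two]
    field_simp
    ring
  rw [hconst] at hsq
  have hH : (∑ i, h i).PosSemidef :=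
    posSemidef_sum _ fun i _ => .of_isHermitian_of_isIdempotentElem (hproj i).1 (hproj i).2
  exact ⟨hsq, fun j hj => hHerm.le_eigenvalues_of_posSemidef_mul_self_sub_smul hH hsq hj⟩
end

section
/- Star-to-path identity (adjoint version): Under the same swap-invariance hypotheses, the star product satisfies m_{(v,v₁)} m_{(v,v₂)} ⋯ m_{(v,v_{p−1})} = W† · m_{(v₁,v₂)} m_{(v₂,v₃)} ⋯ m_{(v_{p−2},v_{p−1})} m_{(v,v_{p−1})}, where W is the cyclic permutation on the factors v, v₁, …, v_{p−1} sending v → v_{p−1}, v₁ → v, v₂ → v₁, …. -/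
open Matrix

/-- The operator on `⊗_{u ∈ V} ℂ^d` (identified with functions `(V → Fin d) → ℂ`) acting
nontrivially only on the sites `v, w`, with two-site kernel `Q`. -/
noncomputable def localOp {V : Type} [Fintype V] [DecidableEq V] (d : ℕ) (v w : V)
    (Q : Matrix (Fin d × Fin d) (Fin d × Fin d) ℂ) : Matrix (V → Fin d) (V → Fin d) ℂ :=
  fun x y => if ∀ u, u ≠ v → u ≠ w → x u = y u then Q (x v, x w) (y v, y w) else 0

/-- The unitary permuting the tensor factors of `⊗_{u ∈ V} ℂ^d` according to a permutation
`σ` of the sites. -/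
noncomputable def permMatrix {V : Type} [Fintype V] [DecidableEq V] (d : ℕ)
    (σ : Equiv.Perm V) : Matrix (V → Fin d) (V → Fin d) ℂ :=
  fun x y => if x = y ∘ σ then 1 else 0

/-!
Conjugation by the permutation matrix of `σ` relabels the sites of a two-site operator:
`P_σ m_{(σ a, σ b)} = m_{(a, b)} P_σ`. By swap invariance `m_{(c,a)} = m_{(c,a)} P_{(c a)}`, and
pushing `P_{(c a)}` to the right through the remaining star `∏ m_{(c,x)}` turns it into the star
centred at `a`, to which induction on the number of leaves applies. The swaps collected on the way
compose to the cycle `c ↦ u₀ ↦ u₁ ↦ ⋯ ↦ c`, whose permutation matrix is `W†`.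
-/

theorem SemiconjBy.list_prod_map {M α : Type*} [Monoid M] {a : M} {f g : α → M} :
    ∀ {l : List α}, (∀ x ∈ l, SemiconjBy a (f x) (g x)) →
      SemiconjBy a (l.map f).prod (l.map g).prod
  | [], _ => by simp
  | x :: l, h => by
    simpa using (h x (by simp)).mul_right (list_prod_map fun y hy => h y (by simp [hy]))

section

variable {V : Type} {d : ℕ}

def relabelSites (d : ℕ) (σ : Equiv.Perm V) : (V → Fin d) ≃ (V → Fin d) :=
  σ.arrowCongr (Equiv.refl (Fin d))

lemma relabelSites_mul (σ τ : Equiv.Perm V) :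
    relabelSites d (τ * σ) = (relabelSites d σ).trans (relabelSites d τ) :=
  rfl

variable [Fintype V] [DecidableEq V]

lemma permMatrix_eq_toMatrix (σ : Equiv.Perm V) :
    permMatrix d σ = (relabelSites d σ).toPEquiv.toMatrix := by
  ext x y
  simp only [permMatrix, PEquiv.toMatrix_apply, Equiv.toPEquiv_apply, Option.mem_def,
    Option.some_inj, ← Equiv.eq_symm_apply]
  rfl

lemma permMatrix_mul_permMatrix (σ τ : Equiv.Perm V) :
    permMatrix d σ * permMatrix d τ = permMatrix d (τ * σ) := by
  simp only [permMatrix_eq_toMatrix, relabelSites_mul, Equiv.toPEquiv_trans,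
    PEquiv.toMatrix_trans]

lemma conjTranspose_permMatrix (σ : Equiv.Perm V) :
    (permMatrix d σ)ᴴ = permMatrix d σ⁻¹ := by
  ext x y
  have : y = x ∘ σ ↔ x = y ∘ σ.symm := by rw [Equiv.eq_comp_symm, eq_comm]
  simp only [permMatrix, conjTranspose_apply, Equiv.Perm.inv_def, this]
  split_ifs <;> simp

variable {Q : Matrix (Fin d × Fin d) (Fin d × Fin d) ℂ}

lemma localOp_submatrix_relabelSites (σ : Equiv.Perm V) (a b : V) :
    (localOp d (σ a) (σ b) Q).submatrix (relabelSites d σ) (relabelSites d σ)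
      = localOp d a b Q := by
  ext x y
  have : (∀ u, u ≠ σ a → u ≠ σ b → x (σ.symm u) = y (σ.symm u)) ↔
      ∀ u, u ≠ a → u ≠ b → x u = y u :=
    (σ.forall_congr (by simp)).symm
  simp [localOp, relabelSites, this]

lemma semiconjBy_permMatrix_localOp (σ : Equiv.Perm V) (a b : V) :
    SemiconjBy (permMatrix d σ) (localOp d (σ a) (σ b) Q) (localOp d a b Q) := by
  rw [SemiconjBy, permMatrix_eq_toMatrix, PEquiv.toMatrix_toPEquiv_mul,
    PEquiv.mul_toMatrix_toPEquiv, ← localOp_submatrix_relabelSites σ a b, submatrix_submatrix,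
    Equiv.self_comp_symm, Function.comp_id]

lemma commute_permMatrix_localOp {σ : Equiv.Perm V} {a b : V} (ha : σ a = a) (hb : σ b = b) :
    Commute (permMatrix d σ) (localOp d a b Q) := by
  simpa [Commute, ha, hb] using semiconjBy_permMatrix_localOp (Q := Q) σ a b

variable (d Q) in
noncomputable def pathProd : List V → Matrix (V → Fin d) (V → Fin d) ℂ
  | a :: b :: l => localOp d a b Q * pathProd (b :: l)
  | _ => 1

lemma commute_permMatrix_pathProd {σ : Equiv.Perm V} {l : List V} (h : ∀ v ∈ l, σ v = v) :
    Commute (permMatrix d σ) (pathProd d Q l) := by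
  fun_induction pathProd d Q l with
  | case1 a b l ih =>
    exact (commute_permMatrix_localOp (h a (by simp)) (h b (by simp))).mul_right
      (ih fun v hv => h v (List.mem_cons_of_mem a hv))
  | case2 => exact Commute.one_right _

lemma pathProd_ofFn {k : ℕ} (u : Fin (k + 2) → V) :
    pathProd d Q (List.ofFn u)
      = (List.ofFn fun i : Fin (k + 1) => localOp d (u i.castSucc) (u i.succ) Q).prod := by
  induction k with
  | zero => simp [pathProd]
  | succ k ih =>
    rw [List.ofFn_succ (f := u), List.ofFn_succ (f := fun i => u i.succ), pathProd,
      ← List.ofFn_succ (f := fun i => u i.succ), ih]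
    conv_rhs => rw [List.ofFn_succ, List.prod_cons]
    rfl

theorem starProd_eq_permMatrix_mul_pathProd
    (hswap : ∀ a b : V, a ≠ b →
      localOp d a b Q * permMatrix d (Equiv.swap a b) = localOp d a b Q ∧
      permMatrix d (Equiv.swap a b) * localOp d a b Q = localOp d a b Q)
    (c : V) (l : List V) (hl : l ≠ []) (hnd : (c :: l).Nodup) :
    (l.map (localOp d c · Q)).prod
      = permMatrix d (c :: l).formPerm * pathProd d Q l * localOp d c (l.getLast hl) Q := by
  induction l generalizing c with
  | nil => exact absurd rfl hl
  | cons a l ih =>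
    obtain ⟨hcl, hnd'⟩ := List.nodup_cons.mp hnd
    have hca : c ≠ a := fun h => hcl (h ▸ List.mem_cons_self)
    rcases l with _ | ⟨b, t⟩
    · simpa [pathProd] using (hswap c a hca).2.symm
    set L := b :: t
    set z := L.getLast (List.cons_ne_nil b t)
    have hzL : z ∈ L := List.getLast_mem _
    set S := Equiv.swap c a
    set ρ := (c :: a :: L).formPerm
    have hfix : ∀ x ∈ L, S x = x := fun x hx =>
      Equiv.swap_apply_of_ne_of_ne (ne_of_mem_of_not_mem hx (mt (List.mem_cons_of_mem a) hcl))
        (ne_of_mem_of_not_mem hx (List.nodup_cons.mp hnd').1)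
    have hSc : S a = c := Equiv.swap_apply_right c a
    have hstar : SemiconjBy (permMatrix d S) (L.map (localOp d c · Q)).prod
        (L.map (localOp d a · Q)).prod :=
      SemiconjBy.list_prod_map fun x hx => by
        simpa [hSc, hfix x hx] using semiconjBy_permMatrix_localOp (Q := Q) S a x
    have hlast : SemiconjBy (permMatrix d S) (localOp d c z Q) (localOp d a z Q) := by
      simpa [hSc, hfix z hzL] using semiconjBy_permMatrix_localOp (Q := Q) S a z
    have hpath : Commute (permMatrix d S) (pathProd d Q L) := commute_permMatrix_pathProd hfix
    have hρc : ρ c = a := List.formPerm_apply_head c a L hnd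
    have hρS : ρ = S * (a :: L).formPerm := List.formPerm_cons_cons c a L
    have hρa : ρ a = b := by
      rw [hρS, Equiv.Perm.mul_apply, List.formPerm_apply_head a b t hnd', hfix b List.mem_cons_self]
    have hρ : SemiconjBy (permMatrix d ρ) (localOp d a b Q) (localOp d c a Q) := by
      simpa [hρc, hρa] using semiconjBy_permMatrix_localOp (Q := Q) ρ c a
    calc ((a :: L).map (localOp d c · Q)).prod
        = localOp d c a Q * (permMatrix d S * (L.map (localOp d c · Q)).prod) := by
          rw [List.map_cons, List.prod_cons, ← mul_assoc, (hswap c a hca).1]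
      _ = localOp d c a Q * (permMatrix d (a :: L).formPerm * pathProd d Q L
            * (localOp d a z Q * permMatrix d S)) := by
          rw [hstar.eq, ih a (List.cons_ne_nil b t) hnd', mul_assoc _ (localOp d a z Q)]
      _ = localOp d c a Q * permMatrix d ρ * pathProd d Q L * localOp d c z Q := by
          rw [← hlast.eq]
          simp only [← mul_assoc]
          rw [mul_assoc _ (pathProd d Q L), ← hpath.eq, ← mul_assoc, mul_assoc (localOp d c a Q),
            permMatrix_mul_permMatrix, ← hρS]
      _ = permMatrix d ρ * pathProd d Q (a :: L) * localOp d c ((a :: L).getLast hl) Q := by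
          rw [← hρ.eq, pathProd, List.getLast_cons (List.cons_ne_nil b t)]
          simp only [mul_assoc]
          rfl

end

theorem stmt17_general {V : Type} [Fintype V] [DecidableEq V] (d k : ℕ)
    (Q : Matrix (Fin d × Fin d) (Fin d × Fin d) ℂ)
    (hswap : ∀ a b : V, a ≠ b →
      localOp d a b Q * permMatrix d (Equiv.swap a b) = localOp d a b Q ∧
      permMatrix d (Equiv.swap a b) * localOp d a b Q = localOp d a b Q)
    (c : V) (u : Fin (k + 2) → V) (hu : Function.Injective u) (huc : ∀ i, u i ≠ c) :
    (List.ofFn fun i : Fin (k + 2) => localOp d c (u i) Q).prod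
      = (permMatrix d ((c :: List.ofFn u).reverse.formPerm))ᴴ
        * (List.ofFn fun i : Fin (k + 1) => localOp d (u i.castSucc) (u i.succ) Q).prod
        * localOp d c (u (Fin.last (k + 1))) Q := by
  have hnd : (c :: List.ofFn u).Nodup :=
    List.nodup_cons.mpr ⟨fun hc => (List.mem_ofFn.mp hc).elim huc, List.nodup_ofFn.mpr hu⟩
  rw [List.formPerm_reverse, _root_.conjTranspose_permMatrix, inv_inv, ← pathProd_ofFn,
    ← List.getLast_ofFn_succ u, ← starProd_eq_permMatrix_mul_pathProd hswap c _ _ hnd,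
    List.map_ofFn]
  rfl

/-- Star-to-path identity (adjoint version): for self-adjoint swap-invariant two-site
operators `m_{(a,b)} = localOp d a b Q`, a center `c` and distinct leaves `u₀, …, u_{k+1}`
(all different from `c`), the star product `m_{(c,u₀)} m_{(c,u₁)} ⋯ m_{(c,u_{k+1})}` equals
`W† · m_{(u₀,u₁)} m_{(u₁,u₂)} ⋯ m_{(u_k,u_{k+1})} · m_{(c,u_{k+1})}`, where `W` is the cyclic
permutation on the sites `c, u₀, …, u_{k+1}` sending `c → u_{k+1}`, `u₀ → c`, `u₁ → u₀`, …. -/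
theorem stmt17 {V : Type} [Fintype V] [DecidableEq V] (d k : ℕ)
    (Q : Matrix (Fin d × Fin d) (Fin d × Fin d) ℂ)
    (hherm : ∀ a b : V, a ≠ b → (localOp d a b Q).IsHermitian)
    (hswap : ∀ a b : V, a ≠ b →
      localOp d a b Q * permMatrix d (Equiv.swap a b) = localOp d a b Q ∧
      permMatrix d (Equiv.swap a b) * localOp d a b Q = localOp d a b Q)
    (c : V) (u : Fin (k + 2) → V) (hu : Function.Injective u) (huc : ∀ i, u i ≠ c) :
    (List.ofFn fun i : Fin (k + 2) => localOp d c (u i) Q).prod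
      = (permMatrix d ((c :: List.ofFn u).reverse.formPerm))ᴴ
        * (List.ofFn fun i : Fin (k + 1) => localOp d (u i.castSucc) (u i.succ) Q).prod
        * localOp d c (u (Fin.last (k + 1))) Q :=
  stmt17_general d k Q hswap c u hu huc
end
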